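/- Every tree with maximum degree at least 2 is of class 1^±: for every signature σ on a tree T, χ'(T, σ) = Δ(T). -/

import Mathlib

open SimpleGraph

namespace Signed

variable {V : Type*}

/-- The color set `M n`. -/
def colorSet (n : ℕ) : Set ℤ :=
  {m : ℤ | 2 * m.natAbs ≤ n ∧ (Even n → m ≠ 0)}

/-- `f` is an `n`-edge-coloring of the signed graph `(G, σ)`. -/
def IsEdgeColoring (G : SimpleGraph V) (σ : Sym2 V → ℤ) (n : ℕ)
    (f : V → Sym2 V → ℤ) : Prop :=
  (∀ u v, G.Adj u v → f u s(u, v) ∈ colorSet n) ∧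
  (∀ u v, G.Adj u v → f u s(u, v) = - σ s(u, v) * f v s(u, v)) ∧
  (∀ u v w, G.Adj u v → G.Adj u w → v ≠ w → f u s(u, v) ≠ f u s(u, w))

/-- `(G, σ)` admits an `n`-edge-coloring. -/
def Colorable (G : SimpleGraph V) (σ : Sym2 V → ℤ) (n : ℕ) : Prop :=
  ∃ f, IsEdgeColoring G σ n f

/-- The signed chromatic index. -/
noncomputable def chromIndex (G : SimpleGraph V) (σ : Sym2 V → ℤ) : ℕ :=
  sInf {n | Colorable G σ n}

/-- `σ` is a signature on `G`: it takes values `±1` on edges. -/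
def IsSignature (G : SimpleGraph V) (σ : Sym2 V → ℤ) : Prop :=
  ∀ e ∈ G.edgeSet, σ e = 1 ∨ σ e = -1

/-- Maximum degree (classical decidability). -/
noncomputable def maxDeg [Fintype V] (G : SimpleGraph V) : ℕ :=
  @SimpleGraph.maxDegree V G _ (Classical.decRel _)

/-- degree of a vertex, instance-free. -/
noncomputable def deg (G : SimpleGraph V) (v : V) : ℕ :=
  (G.neighborSet v).ncard

/-- A signed graph is balanced if every cycle has sign product `1`. -/
def Balanced (H : SimpleGraph V) (σ : Sym2 V → ℤ) : Prop :=
  ∀ (u : V) (w : H.Walk u u), w.IsCycle → (w.edges.map σ).prod = 1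

/-- A set of edges of `G` forming a matching. -/
def IsMatchingSet (G : SimpleGraph V) (M : Set (Sym2 V)) : Prop :=
  M ⊆ G.edgeSet ∧ ∀ e ∈ M, ∀ e' ∈ M, ∀ v : V, v ∈ e → v ∈ e' → e = e'

/-- `H` is a path graph: some path walk carries all of its edges. -/
def IsPathGraph (H : SimpleGraph V) : Prop :=
  ∃ (u v : V) (p : H.Walk u v), p.IsPath ∧ ∀ e, e ∈ H.edgeSet ↔ e ∈ p.edges

/-- Class `1^±`. -/
def Class1pm [Fintype V] (G : SimpleGraph V) : Prop :=
  ∀ σ : Sym2 V → ℤ, IsSignature G σ → chromIndex G σ = maxDeg G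

/-- Class `2^±`. -/
def Class2pm [Fintype V] (G : SimpleGraph V) : Prop :=
  ∀ σ : Sym2 V → ℤ, IsSignature G σ → chromIndex G σ = maxDeg G + 1

end Signed

open Signed SimpleGraph

/-!
A coloring with colors in `M n` gives distinct colors to the incidences at a vertex, and `M n`
has exactly `n` elements, so `χ'(T, σ) ≥ Δ(T)`. Conversely every signed forest is
`Δ`-colorable, by induction on the number of edges: delete an edge `ab` at a leaf `a`, color
the rest, give the incidence `(b, ab)` a color of `M Δ` missed by the at most `Δ - 1` other
incidences at `b`, and give `(a, ab)` the color forced by the sign of `ab`; it cannot clash,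
since `a` has no other incidence.
-/

namespace Signed

section ColorSet

noncomputable def colorFinset (n : ℕ) : Finset ℤ :=
  if Even n then (Finset.Icc (-(n / 2 : ℕ) : ℤ) (n / 2 : ℕ)).erase 0
  else Finset.Icc (-(n / 2 : ℕ) : ℤ) (n / 2 : ℕ)

lemma mem_colorFinset {n : ℕ} {m : ℤ} : m ∈ colorFinset n ↔ m ∈ colorSet n := by
  have hIcc : m ∈ Finset.Icc (-(n / 2 : ℕ) : ℤ) (n / 2 : ℕ) ↔ 2 * m.natAbs ≤ n := by
    rw [Finset.mem_Icc]; omega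
  unfold colorFinset colorSet
  split_ifs with hn
  · simp only [Finset.mem_erase, hIcc, Set.mem_ofPred_eq]
    tauto
  · simp only [hIcc, Set.mem_ofPred_eq]
    tauto

lemma card_colorFinset (n : ℕ) : (colorFinset n).card = n := by
  have hcard := Int.card_Icc (-(n / 2 : ℕ) : ℤ) (n / 2 : ℕ)
  unfold colorFinset
  split_ifs with hn
  · rw [Finset.card_erase_of_mem (by rw [Finset.mem_Icc]; omega), hcard]
    have := Nat.even_iff.mp hn
    omega
  · rw [hcard]
    have := Nat.odd_iff.mp (Nat.not_even_iff_odd.mp hn)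
    omega

lemma coe_colorFinset (n : ℕ) : (colorFinset n : Set ℤ) = colorSet n :=
  Set.ext fun _ => mem_colorFinset

lemma finite_colorSet (n : ℕ) : (colorSet n).Finite :=
  coe_colorFinset n ▸ (colorFinset n).finite_toSet

lemma ncard_colorSet (n : ℕ) : (colorSet n).ncard = n := by
  rw [← coe_colorFinset, Set.ncard_coe_finset, card_colorFinset]

lemma exists_mem_colorSet_notMem {n : ℕ} {s : Set ℤ} (hs : s.Finite) (hcard : s.ncard < n) :
    ∃ c ∈ colorSet n, c ∉ s := by
  by_contra! h
  have := Set.ncard_le_ncard h hs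
  rw [ncard_colorSet] at this
  omega

lemma neg_mul_mem_colorSet {n : ℕ} {c t : ℤ} (ht : t = 1 ∨ t = -1) (hc : c ∈ colorSet n) :
    -t * c ∈ colorSet n := by
  rcases ht with rfl | rfl <;> simpa [colorSet] using hc

end ColorSet

variable {V : Type*} {G : SimpleGraph V} {σ : Sym2 V → ℤ} {n : ℕ}

lemma Colorable.deg_le (h : Colorable G σ n) (v : V) : deg G v ≤ n := by
  obtain ⟨f, hmem, -, hinj⟩ := h
  have hinjOn : Set.InjOn (fun w => f v s(v, w)) (G.neighborSet v) :=
    fun w₁ h₁ w₂ h₂ heq => by_contra fun hne => hinj v w₁ w₂ h₁ h₂ hne heq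
  calc deg G v = ((fun w => f v s(v, w)) '' G.neighborSet v).ncard :=
        hinjOn.ncard_image.symm
    _ ≤ (colorSet n).ncard := by
        refine Set.ncard_le_ncard ?_ (finite_colorSet n)
        rintro _ ⟨w, hw, rfl⟩
        exact hmem v w hw
    _ = n := ncard_colorSet n

lemma deg_eq_degree [Fintype V] [DecidableRel G.Adj] (v : V) : deg G v = G.degree v := by
  rw [deg, Set.ncard_eq_toFinset_card', ← card_neighborSet_eq_degree, Set.toFinset_card]

lemma deg_le_maxDeg [Fintype V] (G : SimpleGraph V) (v : V) : deg G v ≤ maxDeg G := by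
  classical
  rw [deg_eq_degree (G := G)]
  exact G.degree_le_maxDegree v

lemma maxDeg_le_of_forall_deg_le [Fintype V] (h : ∀ v, deg G v ≤ n) : maxDeg G ≤ n := by
  classical
  exact G.maxDegree_le_of_forall_degree_le n fun v => deg_eq_degree (G := G) v ▸ h v

lemma _root_.SimpleGraph.IsAcyclic.exists_leaf [Finite V] (hG : G.IsAcyclic)
    (hE : G.edgeSet.Nonempty) :
    ∃ a b, G.Adj a b ∧ ∀ w, G.Adj a w → w = b := by
  obtain ⟨e, he⟩ := hE
  induction e using Sym2.ind with | h x y => ?_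
  rw [mem_edgeSet] at he
  have : Nonempty V := ⟨x⟩
  obtain ⟨u, v, p, hp, hmax⟩ := Walk.exists_isPath_forall_isPath_length_le_length G
  have hnil : ¬ p.Nil := fun hnil => by
    have := hmax x y _ (Adj.isPath_toWalk he)
    rw [Adj.length_toWalk, Walk.length_eq_zero_iff.mpr hnil] at this
    omega
  refine ⟨u, p.snd, p.adj_snd hnil, fun w hw => hG.eq_snd_of_adj_start hp hw ?_⟩
  by_contra hwp
  have := hmax w v (p.cons hw.symm) (hp.cons hwp)
  simp at this

lemma IsEdgeColoring.extend_leaf [DecidableEq V] {f : V → Sym2 V → ℤ} {a b : V} {c : ℤ}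
    (hf : IsEdgeColoring (G.deleteEdges {s(a, b)}) σ n f) (hab : G.Adj a b)
    (hleaf : ∀ w, G.Adj a w → w = b) (hσ : σ s(a, b) = 1 ∨ σ s(a, b) = -1)
    (hc : c ∈ colorSet n) (hfree : ∀ w, G.Adj b w → w ≠ a → f b s(b, w) ≠ c) :
    IsEdgeColoring G σ n
      (fun w e => if e = s(a, b) then (if w = b then c else -σ e * c) else f w e) := by
  obtain ⟨hmem, hsign, hinj⟩ := hf
  simp only [deleteEdges_adj, Set.mem_singleton_iff] at hmem hsign hinj
  have hne : a ≠ b := hab.ne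
  refine ⟨fun u v huv => ?_, fun u v huv => ?_, fun u v w huv huw hvw => ?_⟩
  · dsimp only
    split_ifs with he hu
    · exact hc
    · exact he ▸ neg_mul_mem_colorSet hσ hc
    · exact hmem u v ⟨huv, he⟩
  · by_cases he : s(u, v) = s(a, b)
    · rcases Sym2.eq_iff.mp he with ⟨rfl, rfl⟩ | ⟨rfl, rfl⟩
      · simp [hne]
      · rw [Sym2.eq_swap] at hσ
        rcases hσ with h | h <;> simp [hne, h]
    · simpa only [if_neg he] using hsign u v ⟨huv, he⟩
  · by_cases hv : s(u, v) = s(a, b) <;> by_cases hw : s(u, w) = s(a, b)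
    · grind
    · rcases Sym2.eq_iff.mp hv with ⟨rfl, rfl⟩ | ⟨rfl, rfl⟩
      · exact absurd (hleaf w huw).symm hvw
      · simpa [hw] using (hfree w huw hvw.symm).symm
    · rcases Sym2.eq_iff.mp hw with ⟨rfl, rfl⟩ | ⟨rfl, rfl⟩
      · exact absurd (hleaf v huv) hvw
      · simpa [hv] using hfree v huv hvw
    · simpa only [if_neg hv, if_neg hw] using hinj u v w ⟨huv, hv⟩ ⟨huw, hw⟩ hvw

lemma IsSignature.anti {H : SimpleGraph V} (hle : H ≤ G) (hσ : IsSignature G σ) :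
    IsSignature H σ :=
  fun e he => hσ e (edgeSet_subset_edgeSet.mpr hle he)

lemma deg_mono [Finite V] {H : SimpleGraph V} (hle : H ≤ G) (v : V) : deg H v ≤ deg G v :=
  Set.ncard_le_ncard (neighborSet_mono hle v)

lemma Colorable.of_deleteEdges_leaf [Finite V] {a b : V}
    (h : Colorable (G.deleteEdges {s(a, b)}) σ n) (hab : G.Adj a b)
    (hleaf : ∀ w, G.Adj a w → w = b) (hσ : σ s(a, b) = 1 ∨ σ s(a, b) = -1)
    (hb : deg G b ≤ n) : Colorable G σ n := by
  classical
  obtain ⟨f, hf⟩ := h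
  set used := (fun w => f b s(b, w)) '' (G.neighborSet b \ {a})
  have hused : used.ncard < n := calc
    used.ncard ≤ (G.neighborSet b \ {a}).ncard := Set.ncard_image_le
    _ < deg G b := Set.ncard_sdiff_singleton_lt_of_mem hab.symm
    _ ≤ n := hb
  obtain ⟨c, hc, hcu⟩ := exists_mem_colorSet_notMem used.toFinite hused
  exact ⟨_, hf.extend_leaf hab hleaf hσ hc fun w hbw hwa hfc => hcu ⟨w, ⟨hbw, hwa⟩, hfc⟩⟩

theorem colorable_of_isAcyclic [Finite V] (hG : G.IsAcyclic) (hσ : IsSignature G σ)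
    (hdeg : ∀ v, deg G v ≤ n) : Colorable G σ n := by
  induction hk : G.edgeSet.ncard generalizing G with
  | zero =>
    obtain rfl : G = ⊥ := edgeSet_eq_empty.mp ((Set.ncard_eq_zero G.edgeSet.toFinite).mp hk)
    exact ⟨fun _ _ => 0, fun _ _ h => h.elim, fun _ _ h => h.elim, fun _ _ _ h => h.elim⟩
  | succ k ih =>
    obtain ⟨a, b, hab, hleaf⟩ := hG.exists_leaf (Set.nonempty_of_ncard_ne_zero (by omega))
    have hle : G.deleteEdges {s(a, b)} ≤ G := deleteEdges_le _
    have hk' : (G.deleteEdges {s(a, b)}).edgeSet.ncard = k := by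
      rw [edgeSet_deleteEdges, Set.ncard_sdiff_singleton_of_mem (G.mem_edgeSet.mpr hab)]
      omega
    exact (ih (hG.anti hle) (hσ.anti hle) (fun v => (deg_mono hle v).trans (hdeg v)) hk')
      |>.of_deleteEdges_leaf hab hleaf (hσ _ hab) (hdeg b)

end Signed

theorem tree_class1_general {V : Type*} [Fintype V] (G : SimpleGraph V)
    (htree : G.IsTree) :
    ∀ σ : Sym2 V → ℤ, IsSignature G σ → chromIndex G σ = maxDeg G := fun _ hσ =>
  IsLeast.csInf_eq ⟨colorable_of_isAcyclic htree.isAcyclic hσ (deg_le_maxDeg G),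
    fun _ hm => maxDeg_le_of_forall_deg_le hm.deg_le⟩

/-- Every tree with maximum degree at least `2` is of class `1^±`. -/
theorem tree_class1 {V : Type*} [Fintype V] (G : SimpleGraph V)
    (htree : G.IsTree) (hΔ : 2 ≤ maxDeg G) :
    ∀ σ : Sym2 V → ℤ, IsSignature G σ → chromIndex G σ = maxDeg G :=
  tree_class1_general G htree
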